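/- Let F ∈ ℂ[x₁,…,xₙ, z] be irreducible of degree d ≥ 1 in z with leading coefficient G ∈ ℂ[x₁,…,xₙ], and let A ∈ ℤ^{n×n} be a nonsingular matrix. Then the Laurent polynomial F(x^A, z) (substituting each xⱼ by the monomial given by the j-th row of A) has no nontrivial factors lying in the localization ℂ[x^{±1}]_G; equivalently, every irreducible factor of F(x^A, z) has positive degree in z. -/

import Mathlib

/-!
The substitution `x ↦ x^A` factors as `ℂ[x] → ℂ[ℤⁿ] → ℂ[ℤⁿ]`, the second map being induced by
the injective lattice map `v ↦ vA`, whose image `L` has index `|det A|`. If a nonunit Laurent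
polynomial `c` divided every coefficient of `F(x^A, z)`, so would its norm `N(c)`, the product
of the twists of `c` by the characters of `ℤⁿ/L`. The norm is invariant under these twists,
hence supported on `L`, so it descends to a nonunit `e` dividing a fixed power of every
coefficient of `F`. After clearing monomial denominators, a prime factor of `e` that is not a
monomial divides every coefficient of `F`, which contradicts the primitivity of the irreducible,
nonconstant `F`.
-/

open AddMonoidAlgebra

namespace AddMonoidAlgebra

section Twist

variable {R G : Type*} [CommSemiring R] [AddCommMonoid G]

noncomputable def twist (ψ : AddChar G R) : R[G] →ₐ[R] R[G] :=
  lift R R[G] G (of R G * (algebraMap R R[G]).toMonoidHom.comp ψ.toMonoidHom)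

lemma twist_single (ψ : AddChar G R) (g : G) (r : R) :
    twist ψ (single g r) = single g (ψ g * r) := by
  simp [twist, lift_single, of_apply, single_mul_single, mul_comm]

lemma coeff_twist (ψ : AddChar G R) (x : R[G]) (g : G) :
    (twist ψ x).coeff g = ψ g * x.coeff g := by
  induction x using induction_linear with
  | zero => simp
  | add x y hx hy => simp [hx, hy, mul_add]
  | single h r =>
    rw [twist_single]
    by_cases hg : h = g <;> simp [coeff_single, hg]

lemma twist_twist (ψ ψ' : AddChar G R) (x : R[G]) :
    twist ψ (twist ψ' x) = twist (ψ * ψ') x := by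
  ext g
  simp [coeff_twist, mul_assoc]

lemma twist_one_apply (x : R[G]) : twist 1 x = x := by
  ext g
  simp [coeff_twist]

lemma twist_eq_self {ψ : AddChar G R} {x : R[G]} (h : ∀ g ∈ x.coeff.support, ψ g = 1) :
    twist ψ x = x := by
  ext g
  rw [coeff_twist]
  by_cases hg : g ∈ x.coeff.support
  · rw [h g hg, one_mul]
  · rw [Finsupp.notMem_support_iff.mp hg, mul_zero]

end Twist

section CharNorm

variable {R H K : Type*} [CommSemiring R] [AddCommMonoid H] [AddCommGroup K]
  [Fintype (AddChar K R)] (φ : H →+ K)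

/-- The norm from `R[H]` down to the elements supported on `ker φ`, when the characters of `K`
separate points. -/
noncomputable def charNorm (x : R[H]) : R[H] :=
  ∏ ψ : AddChar K R, twist (ψ.compAddMonoidHom φ) x

lemma twist_charNorm (ψ : AddChar K R) (x : R[H]) :
    twist (ψ.compAddMonoidHom φ) (charNorm φ x) = charNorm φ x := by
  simp only [charNorm, map_prod, twist_twist]
  exact Fintype.prod_equiv (Equiv.mulLeft ψ) _ _ fun _ => rfl

lemma dvd_charNorm (x : R[H]) : x ∣ charNorm φ x := by
  have h1 : (1 : AddChar K R).compAddMonoidHom φ = 1 := by ext; rfl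
  simpa [charNorm, h1, twist_one_apply] using
    Finset.dvd_prod_of_mem (fun ψ : AddChar K R => twist (ψ.compAddMonoidHom φ) x)
      (Finset.mem_univ 1)

lemma charNorm_mul (x y : R[H]) : charNorm φ (x * y) = charNorm φ x * charNorm φ y := by
  simp only [charNorm, map_mul, Finset.prod_mul_distrib]

lemma charNorm_eq_pow {x : R[H]} (hx : ∀ h ∈ x.coeff.support, φ h = 0) :
    charNorm φ x = x ^ Fintype.card (AddChar K R) := by
  rw [charNorm, Finset.prod_congr rfl fun ψ _ => twist_eq_self fun h hh => by simp [hx h hh],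
    Finset.prod_const, Finset.card_univ]

end CharNorm

lemma support_subset_ker_of_forall_twist_eq_self {H K : Type*} [AddCommMonoid H]
    [AddCommGroup K] [Finite K] {φ : H →+ K} {y : ℂ[H]}
    (hy : ∀ ψ : AddChar K ℂ, twist (ψ.compAddMonoidHom φ) y = y) :
    ∀ h ∈ y.coeff.support, φ h = 0 := by
  intro h hh
  refine AddChar.forall_apply_eq_zero.mp fun ψ => ?_
  have := congr(($(hy ψ)).coeff h)
  rw [coeff_twist] at this
  exact mul_left_eq_self₀.mp this |>.resolve_right (Finsupp.mem_support_iff.mp hh)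

lemma support_mapDomain_subset {R M N : Type*} [Semiring R] (f : M → N) (x : R[M]) :
    ↑(mapDomain f x).coeff.support ⊆ Set.range f := by
  classical
  intro n hn
  obtain ⟨m, -, rfl⟩ :=
    Finset.mem_image.mp (Finsupp.mapDomain_support (coeff_mapDomain f x ▸ hn))
  exact ⟨m, rfl⟩

theorem exists_not_isUnit_dvd_pow_of_dvd_mapDomain {G H K ι : Type*} [AddMonoid G]
    [AddCommMonoid H] [AddCommGroup K] [Finite K] {f : G →+ H} (hf : Function.Injective f)
    {φ : H →+ K} (hker : ∀ h, φ h = 0 ↔ h ∈ Set.range f) {c : ℂ[H]} (hc : ¬IsUnit c)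
    {a : ι → ℂ[G]} (hca : ∀ i, c ∣ mapDomainRingHom ℂ f (a i)) :
    ∃ e : ℂ[G], ¬IsUnit e ∧ ∀ i, e ∣ a i ^ Fintype.card (AddChar K ℂ) := by
  set F := mapDomainRingHom ℂ f
  have hdescend (x : ℂ[H]) : ∃ y, F y = charNorm φ x :=
    ⟨comapDomain f hf (charNorm φ x), mapDomain_comapDomain (fun h hh => (hker h).mp
      (support_subset_ker_of_forall_twist_eq_self (twist_charNorm φ · x) h hh)) hf⟩
  have hpow (y : ℂ[G]) : charNorm φ (F y) = F (y ^ Fintype.card (AddChar K ℂ)) := by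
    rw [map_pow]
    exact charNorm_eq_pow φ fun h hh => (hker h).mpr (support_mapDomain_subset f y hh)
  obtain ⟨e, he⟩ := hdescend c
  refine ⟨e, fun hu => hc (isUnit_of_dvd_unit (dvd_charNorm φ c) (he ▸ hu.map F)),
    fun i => ?_⟩
  obtain ⟨r, hr⟩ := hca i
  obtain ⟨s, hs⟩ := hdescend r
  refine ⟨s, mapDomain_injective hf ?_⟩
  change F _ = F _
  rw [← hpow, hr, charNorm_mul, ← he, ← hs, map_mul]

end AddMonoidAlgebra

namespace Matrix

variable {n : Type*} [Fintype n] [DecidableEq n]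

def adjugateModDet (A : Matrix n n ℤ) : (n → ℤ) →+ (n → ZMod A.det.natAbs) :=
  ((Int.castAddHom (ZMod A.det.natAbs)).compLeft n).comp A.adjugate.vecMulLinear.toAddMonoidHom

lemma adjugateModDet_eq_zero_iff {A : Matrix n n ℤ} (hA : A.det ≠ 0) (v : n → ℤ) :
    A.adjugateModDet v = 0 ↔ v ∈ Set.range (fun w => w ᵥ* A) := by
  have hcast : A.adjugateModDet v = 0 ↔ ∀ i, A.det ∣ (v ᵥ* A.adjugate) i := by
    simp [adjugateModDet, funext_iff, ZMod.intCast_zmod_eq_zero_iff_dvd]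
  rw [hcast]
  constructor
  · intro h
    choose w hw using h
    refine ⟨w, smul_right_injective _ hA ?_⟩
    calc A.det • (w ᵥ* A) = (v ᵥ* A.adjugate) ᵥ* A := by
          rw [← smul_vecMul, show v ᵥ* A.adjugate = A.det • w from funext hw]
      _ = A.det • v := by rw [vecMul_vecMul, adjugate_mul, vecMul_smul, vecMul_one]
  · rintro ⟨w, rfl⟩ i
    rw [vecMul_vecMul, mul_adjugate, vecMul_smul, vecMul_one]
    exact dvd_mul_right _ _

end Matrix

namespace MvPolynomial

variable {σ R : Type*}

section CommSemiring

variable [CommSemiring R]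

noncomputable def toLaurent : MvPolynomial σ R →+* R[σ → ℤ] :=
  mapDomainRingHom R (((Nat.castAddMonoidHom ℤ).compLeft σ).comp Finsupp.coeFnAddHom)

lemma toLaurent_monomial (v : σ →₀ ℕ) (r : R) :
    toLaurent (monomial v r) = single (fun i => (v i : ℤ)) r :=
  mapDomain_single

lemma toLaurent_injective : Function.Injective (toLaurent : MvPolynomial σ R → R[σ → ℤ]) :=
  mapDomain_injective fun v w h => Finsupp.ext fun i => by simpa using congr_fun h i

lemma isUnit_toLaurent_monomial (v : σ →₀ ℕ) : IsUnit (toLaurent (monomial v (1 : R))) := by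
  simpa [toLaurent_monomial, of_apply] using
    (Group.isUnit (Multiplicative.ofAdd fun i => (v i : ℤ))).map (of R (σ → ℤ))

lemma exists_toLaurent_monomial_mul_eq [Finite σ] (x : R[σ → ℤ]) :
    ∃ v r, toLaurent (monomial v 1) * x = toLaurent r := by
  induction x using induction_linear with
  | zero => exact ⟨0, 0, by simp⟩
  | add x y hx hy =>
    obtain ⟨v, r, hr⟩ := hx
    obtain ⟨w, s, hs⟩ := hy
    refine ⟨v + w, monomial w 1 * r + monomial v 1 * s, ?_⟩
    have hvw : monomial (v + w) (1 : R) = monomial v 1 * monomial w 1 := by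
      rw [monomial_mul, one_mul]
    rw [hvw, map_add, map_mul, map_mul, map_mul, ← hr, ← hs]
    ring
  | single g r =>
    refine ⟨Finsupp.equivFunOnFinite.symm fun i => (-g i).toNat,
      monomial (Finsupp.equivFunOnFinite.symm fun i => (g i).toNat) r, ?_⟩
    rw [toLaurent_monomial, toLaurent_monomial, single_mul_single, one_mul]
    congr 1
    ext i
    simp only [Pi.add_apply, Finsupp.coe_equivFunOnFinite_symm]
    omega

lemma dvd_of_toLaurent_dvd_toLaurent [Finite σ] {g s : MvPolynomial σ R} (hg : Prime g)
    (hgu : ¬IsUnit (toLaurent g)) (h : toLaurent g ∣ toLaurent s) : g ∣ s := by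
  obtain ⟨r, hr⟩ := h
  obtain ⟨v, r₀, hr₀⟩ := exists_toLaurent_monomial_mul_eq r
  have hmul : monomial v 1 * s = g * r₀ :=
    toLaurent_injective (by rw [map_mul, map_mul, hr, ← hr₀]; ring)
  refine (hg.dvd_or_dvd ⟨r₀, hmul⟩).resolve_left fun hv => hgu ?_
  exact isUnit_of_dvd_unit (map_dvd toLaurent hv) (isUnit_toLaurent_monomial v)

lemma eval₂Hom_single_eq_mapDomainRingHom_comp_toLaurent {n : Type*} [Fintype σ]
    (A : Matrix σ n ℤ) :
    eval₂Hom singleZeroRingHom (fun j => single (fun i => A j i) (1 : R)) =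
      (mapDomainRingHom R A.vecMulLinear.toAddMonoidHom).comp toLaurent := by
  refine ringHom_ext (fun r => ?_) fun j => ?_
  · simp [← monomial_zero', toLaurent_monomial, ← Pi.zero_def]
  · rw [eval₂Hom_X', RingHom.comp_apply, X, toLaurent_monomial, mapDomainRingHom_apply,
      mapDomain_single]
    classical
    have hj : (fun i => ((Finsupp.single j 1 : σ →₀ ℕ) i : ℤ)) = Pi.single j 1 := by
      ext i
      simp [Finsupp.single_apply, Pi.single_apply, eq_comm]
    rw [LinearMap.toAddMonoidHom_coe, Matrix.vecMulLinear_apply, hj, Matrix.single_one_vecMul]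
    rfl

end CommSemiring

variable [CommRing R] [UniqueFactorizationMonoid R]

lemma exists_prime_dvd_of_not_isUnit_toLaurent {x : MvPolynomial σ R} (hx : x ≠ 0)
    (hxu : ¬IsUnit (toLaurent x)) : ∃ g, Prime g ∧ g ∣ x ∧ ¬IsUnit (toLaurent g) := by
  induction x using UniqueFactorizationMonoid.induction_on_prime with
  | h₁ => exact absurd rfl hx
  | h₂ u hu => exact absurd (hu.map _) hxu
  | h₃ a p ha hp ih =>
    by_cases hpu : IsUnit (toLaurent p)
    · obtain ⟨g, hg, hga, hgu⟩ := ih ha fun h => hxu (by rw [map_mul]; exact hpu.mul h)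
      exact ⟨g, hg, hga.mul_left p, hgu⟩
    · exact ⟨p, hp, dvd_mul_right p a, hpu⟩

theorem exists_prime_dvd_of_dvd_toLaurent [Finite σ] {ι : Type*} {e : R[σ → ℤ]}
    (he : ¬IsUnit e) {s : ι → MvPolynomial σ R} {i₀ : ι} (hs : s i₀ ≠ 0)
    (hes : ∀ i, e ∣ toLaurent (s i)) :
    ∃ g, Prime g ∧ ∀ i, g ∣ s i := by
  obtain ⟨v, e₀, he₀⟩ := exists_toLaurent_monomial_mul_eq e
  have hv := isUnit_toLaurent_monomial (R := R) v
  have he₀0 : e₀ ≠ 0 := by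
    rintro rfl
    rw [map_zero, hv.mul_right_eq_zero] at he₀
    exact hs (toLaurent_injective (by rw [map_zero, ← zero_dvd_iff, ← he₀]; exact hes i₀))
  have he₀u : ¬IsUnit (toLaurent e₀) := by
    rw [← he₀, IsUnit.mul_iff]
    exact fun h => he h.2
  obtain ⟨g, hg, hge, hgu⟩ := exists_prime_dvd_of_not_isUnit_toLaurent he₀0 he₀u
  refine ⟨g, hg, fun i => dvd_of_toLaurent_dvd_toLaurent hg hgu ?_⟩
  exact (hv.dvd_mul_left.mp (he₀ ▸ map_dvd toLaurent hge)).trans (hes i)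

end MvPolynomial

/-- Let `F ∈ ℂ[x₁,…,xₙ][z]` be irreducible of degree `d ≥ 1` in `z` and `A ∈ ℤ^{n×n}`
nonsingular. Then every irreducible factor of the Laurent polynomial `F(x^A, z)`
(obtained by substituting `xⱼ` by the monomial with exponent vector the `j`-th row of `A`)
has positive degree in `z`; equivalently, `F(x^A, z)` has no nontrivial factors coming
from `ℂ[x^{±1}]_G`. -/
theorem stmt_12 (n : ℕ) (F : Polynomial (MvPolynomial (Fin n) ℂ))
    (hF : Irreducible F) (d : ℕ) (hd : F.natDegree = d) (hd1 : 1 ≤ d)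
    (A : Matrix (Fin n) (Fin n) ℤ) (hA : A.det ≠ 0) :
    ∀ q : Polynomial (AddMonoidAlgebra ℂ (Fin n → ℤ)), Irreducible q →
      q ∣ F.map (MvPolynomial.eval₂Hom (AddMonoidAlgebra.singleZeroRingHom)
        (fun j => AddMonoidAlgebra.single (fun i => A j i) 1)) →
      0 < q.natDegree := by
  intro q hq hqF
  by_contra! hdeg
  obtain ⟨c, rfl⟩ : ∃ c, q = Polynomial.C c :=
    ⟨_, Polynomial.eq_C_of_natDegree_eq_zero (by omega)⟩
  have hc : ¬IsUnit c := fun h => hq.not_isUnit (Polynomial.isUnit_C.mpr h)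
  rw [MvPolynomial.eval₂Hom_single_eq_mapDomainRingHom_comp_toLaurent,
    Polynomial.C_dvd_iff_dvd_coeff] at hqF
  have : NeZero A.det.natAbs := ⟨Int.natAbs_ne_zero.mpr hA⟩
  obtain ⟨e, he, heF⟩ := exists_not_isUnit_dvd_pow_of_dvd_mapDomain
    (Matrix.vecMul_injective_iff.mpr (Matrix.linearIndependent_rows_of_det_ne_zero hA))
    (Matrix.adjugateModDet_eq_zero_iff hA) hc (a := fun i => MvPolynomial.toLaurent (F.coeff i))
    fun i => by simpa only [Polynomial.coeff_map, RingHom.comp_apply] using hqF i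
  obtain ⟨g, hg, hgF⟩ := MvPolynomial.exists_prime_dvd_of_dvd_toLaurent he
    (s := fun i => F.coeff i ^ Fintype.card (AddChar (Fin n → ZMod A.det.natAbs) ℂ))
    (pow_ne_zero _ (Polynomial.leadingCoeff_ne_zero.mpr hF.ne_zero)) fun i => by simpa using heF i
  have hgC : Polynomial.C g ∣ F :=
    (Polynomial.C_dvd_iff_dvd_coeff _ _).mpr fun i => hg.dvd_of_dvd_pow (hgF i)
  exact hg.not_isUnit (hF.isPrimitive (by omega) g hgC)
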